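/- Assume Constraints I, II, and IV. Let p be a probability distribution over ℕ, let n_H := |{i : p_i ≥ ℓ}| be the number of heavy elements, and let μ_L := Σ_{i : 0 < p_i < ℓ} p_i be the total mass of light elements. Then Σᵢ Q(p_i) ≥ (1−δ)·(n_H + μ_L/ℓ). Moreover, for any integer k with 1 ≤ k ≤ n, if p is ε-far from having support size at most k, then Σᵢ Q(p_i) > (1 + 3ε/4)·k. -/

import Mathlib

/-- The degree-`d` Chebyshev polynomial of the first kind, as a real function. -/
noncomputable def cheb : ℕ → ℝ → ℝ
  | 0, _ => 1
  | 1, x => x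
  | (n+2), x => 2 * x * cheb (n+1) x - cheb n x

/-- `ψ(x) = (r+ℓ−2x)/(r−ℓ)`. -/
noncomputable def psiMap (ℓ r x : ℝ) : ℝ := (r + ℓ - 2 * x) / (r - ℓ)

/-- `δ = 1 / T_d(1 + 2α/(1−α))` where `α = ℓ/r`. -/
noncomputable def cDelta (ℓ r : ℝ) (d : ℕ) : ℝ :=
  1 / cheb d (1 + 2 * (ℓ / r) / (1 - ℓ / r))

/-- `P_d(x) = −δ·T_d(ψ(x))`. -/
noncomputable def Pd (ℓ r : ℝ) (d : ℕ) (x : ℝ) : ℝ := - cDelta ℓ r d * cheb d (psiMap ℓ r x)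

/-- `Q(x) = 1 + e^{−mx}·P_d(x)`. -/
noncomputable def Qfun (ℓ r : ℝ) (d : ℕ) (m x : ℝ) : ℝ :=
  1 + Real.exp (-(m * x)) * Pd ℓ r d x

/-- `Q*(x) = 1 + P_d(x)` for `x < ℓ` and `1 − δ` for `x ≥ ℓ`. -/
noncomputable def Qstar (ℓ r : ℝ) (d : ℕ) (x : ℝ) : ℝ :=
  if x < ℓ then 1 + Pd ℓ r d x else 1 - cDelta ℓ r d

/-- Constraint I: `r ≥ 3ℓ` and `d ≥ 4·√((r−ℓ)/(2ℓ))·ln(20/ε)`. -/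
def ConstraintI (ℓ r : ℝ) (d : ℕ) (ε : ℝ) : Prop :=
  r ≥ 3 * ℓ ∧ (d : ℝ) ≥ 4 * Real.sqrt ((r - ℓ) / (2 * ℓ)) * Real.log (20 / ε)

/-- Constraint II: `m ≥ 5.5·d/(r−ℓ)`. -/
def ConstraintII (ℓ r : ℝ) (d : ℕ) (m : ℝ) : Prop :=
  m ≥ 5.5 * d / (r - ℓ)

/-- Constraint III: `m ≤ ε²n²/256` and
`d⁶·9^d·((r+ℓ)/(r−ℓ))^{2d−2} ≤ (1/4)·m·(r−ℓ)²·n²`. -/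
def ConstraintIII (ℓ r : ℝ) (d : ℕ) (m ε : ℝ) (n : ℕ) : Prop :=
  m ≤ ε ^ 2 * (n : ℝ) ^ 2 / 256 ∧
  (d : ℝ) ^ 6 * 9 ^ d * ((r + ℓ) / (r - ℓ)) ^ (2 * d - 2) ≤
    (1 / 4) * m * (r - ℓ) ^ 2 * (n : ℝ) ^ 2

/-- Constraint IV: `ℓ ≤ ε/(20n)`. -/
def ConstraintIV (ℓ ε : ℝ) (n : ℕ) : Prop := ℓ ≤ ε / (20 * n)

/-- Constraint IVb: `ℓ ≤ (1/3)·(ε/n)·log₂(1/ε)`. -/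
def ConstraintIVb (ℓ ε : ℝ) (n : ℕ) : Prop :=
  ℓ ≤ (1 / 3) * (ε / n) * Real.logb 2 (1 / ε)

/-- A probability distribution over `ℕ`: a nonnegative sequence summing to `1`. -/
def IsDist (p : ℕ → ℝ) : Prop := (∀ i, 0 ≤ p i) ∧ ∑' i, p i = 1

/-- Total variation distance `(1/2)·Σᵢ|p_i − q_i|`. -/
noncomputable def dTV (p q : ℕ → ℝ) : ℝ := (1 / 2) * ∑' i, |p i - q i|

/-- `p` is `ε`-far from having support size at most `n`. -/
def FarFromSuppSize (ε : ℝ) (n : ℕ) (p : ℕ → ℝ) : Prop :=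
  ∀ q : ℕ → ℝ, IsDist q → {i | q i ≠ 0}.encard ≤ n → dTV p q > ε

/-- `Φ(λ) = (1 + ε/(λ·ℓ·n))·Q*(λ·ℓ)`. -/
noncomputable def Phi (ℓ r : ℝ) (d : ℕ) (ε : ℝ) (n : ℕ) (lam : ℝ) : ℝ :=
  (1 + ε / (lam * ℓ * n)) * Qstar ℓ r d (lam * ℓ)

section cheblem
open Real Set
lemma cheb_zero (x : ℝ) : cheb 0 x = 1 := rfl
lemma cheb_one' (x : ℝ) : cheb 1 x = x := rfl
lemma cheb_succ_succ (n : ℕ) (x : ℝ) : cheb (n+2) x = 2 * x * cheb (n+1) x - cheb n x := rfl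

lemma cheb_cos : ∀ (n : ℕ) (θ : ℝ), cheb n (Real.cos θ) = Real.cos (n * θ) := by
  have key : ∀ n : ℕ, (∀ θ, cheb n (Real.cos θ) = Real.cos (n * θ)) ∧
      (∀ θ, cheb (n+1) (Real.cos θ) = Real.cos ((n+1) * θ)) := by
    intro n
    induction n with
    | zero => constructor <;> intro θ <;> simp [cheb]
    | succ k ih =>
      refine ⟨by intro θ; rw [ih.2 θ]; norm_cast, fun θ => ?_⟩
      rw [cheb_succ_succ, ih.1, ih.2]
      have h1 : ((k:ℝ)+1+1) * θ = ((k+1) * θ) + θ := by ring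
      have h2 : (k:ℝ) * θ = ((k+1) * θ) - θ := by ring
      push_cast
      rw [h1, h2, Real.cos_add, Real.cos_sub]
      ring
  intro n; exact (key n).1

lemma cheb_cosh : ∀ (n : ℕ) (θ : ℝ), cheb n (Real.cosh θ) = Real.cosh (n * θ) := by
  have key : ∀ n : ℕ, (∀ θ, cheb n (Real.cosh θ) = Real.cosh (n * θ)) ∧
      (∀ θ, cheb (n+1) (Real.cosh θ) = Real.cosh ((n+1) * θ)) := by
    intro n
    induction n with
    | zero => constructor <;> intro θ <;> simp [cheb]
    | succ k ih =>
      refine ⟨by intro θ; rw [ih.2 θ]; norm_cast, fun θ => ?_⟩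
      rw [cheb_succ_succ, ih.1, ih.2]
      have h1 : ((k:ℝ)+1+1) * θ = ((k+1) * θ) + θ := by ring
      have h2 : (k:ℝ) * θ = ((k+1) * θ) - θ := by ring
      push_cast
      rw [h1, h2, Real.cosh_add, Real.cosh_sub]
      ring
  intro n; exact (key n).1

lemma cheb_at_one (n : ℕ) : cheb n 1 = 1 := by
  have := cheb_cosh n 0
  simpa using this

lemma abs_cheb_le_one (n : ℕ) {x : ℝ} (hx : |x| ≤ 1) : |cheb n x| ≤ 1 := by
  have h1 : -1 ≤ x := (abs_le.1 hx).1
  have h2 : x ≤ 1 := (abs_le.1 hx).2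
  have := cheb_cos n (Real.arccos x)
  rw [Real.cos_arccos h1 h2] at this
  rw [this]
  exact Real.abs_cos_le_one _

lemma cheb_neg : ∀ (n : ℕ) (x : ℝ), cheb n (-x) = (-1)^n * cheb n x := by
  have key : ∀ n : ℕ, (∀ x, cheb n (-x) = (-1)^n * cheb n x) ∧
      (∀ x, cheb (n+1) (-x) = (-1)^(n+1) * cheb (n+1) x) := by
    intro n
    induction n with
    | zero => constructor <;> intro x <;> simp [cheb]
    | succ k ih =>
      refine ⟨ih.2, fun x => ?_⟩
      rw [cheb_succ_succ, ih.1, ih.2, cheb_succ_succ]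
      ring
  intro n; exact (key n).1


structure ChebProp (f : ℝ → ℝ) : Prop where
  cvx : ConvexOn ℝ (Set.Ici 1) f
  mono : MonotoneOn f (Set.Ici 1)
  nonneg : ∀ x ∈ Set.Ici (1:ℝ), 0 ≤ f x

lemma ChebProp.add {f g : ℝ → ℝ} (hf : ChebProp f) (hg : ChebProp g) :
    ChebProp (fun x => f x + g x) :=
  ⟨hf.cvx.add hg.cvx, fun a ha b hb hab => add_le_add (hf.mono ha hb hab) (hg.mono ha hb hab),
   fun x hx => add_nonneg (hf.nonneg x hx) (hg.nonneg x hx)⟩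

lemma ChebProp.mul {f g : ℝ → ℝ} (hf : ChebProp f) (hg : ChebProp g) :
    ChebProp (fun x => f x * g x) := by
  refine ⟨?_, ?_, fun x hx => mul_nonneg (hf.nonneg x hx) (hg.nonneg x hx)⟩
  · exact hf.cvx.mul hg.cvx hf.nonneg hg.nonneg (hf.mono.monovaryOn hg.mono)
  · intro a ha b hb hab
    exact mul_le_mul (hf.mono ha hb hab) (hg.mono ha hb hab) (hg.nonneg a ha) (hf.nonneg b hb)

lemma convexOn_affine (a b : ℝ) : ConvexOn ℝ (Set.Ici (1:ℝ)) (fun x => a*x+b) := by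
  refine ⟨convex_Ici 1, fun x _ y _ p q hp hq hpq => ?_⟩
  simp only [smul_eq_mul]
  exact le_of_eq (by linear_combination (-b) * hpq)

lemma chebProp_const_one : ChebProp (fun _ : ℝ => 1) :=
  ⟨by simpa using convexOn_affine 0 1, fun a _ b _ _ => le_rfl, fun x _ => zero_le_one⟩

lemma chebProp_id : ChebProp (fun x : ℝ => x) :=
  ⟨by simpa using convexOn_affine 1 0, fun a _ b _ h => h, fun x hx => le_trans zero_le_one hx⟩

lemma chebProp_lin : ChebProp (fun x : ℝ => 2*x - 2) := by
  refine ⟨?_, ?_, ?_⟩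
  · have h := convexOn_affine 2 (-2)
    have he : (fun x : ℝ => 2*x - 2) = fun x : ℝ => 2*x + (-2) := by funext x; ring
    rw [he]; exact h
  · intro a _ b _ h; show 2*a-2 ≤ 2*b-2; linarith
  · intro x hx; simp only [Set.mem_Ici] at hx; show (0:ℝ) ≤ 2*x-2; linarith

lemma cheb_bundle : ∀ n : ℕ, ChebProp (cheb n) ∧ ChebProp (fun x => cheb (n+1) x - cheb n x) := by
  intro n
  induction n with
  | zero =>
    constructor
    · exact ⟨by simpa [cheb] using convexOn_affine 0 1, fun a _ b _ _ => le_rfl,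
        fun x _ => by simp [cheb]⟩
    · have : (fun x : ℝ => cheb 1 x - cheb 0 x) = fun x => 1*x + (-1) := by
        funext x; simp [cheb]; ring
      rw [this]
      exact ⟨convexOn_affine 1 (-1), fun a _ b _ h => by linarith,
        fun x hx => by simp only [Set.mem_Ici] at hx; linarith⟩
  | succ k ih =>
    obtain ⟨hT, hD⟩ := ih
    have hT1 : ChebProp (cheb (k+1)) := by
      have := hT.add hD
      convert this using 1; funext x; ring
    have hD1 : ChebProp (fun x => cheb (k+2) x - cheb (k+1) x) := by
      have hmul := chebProp_lin.mul hT1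
      have := hmul.add hD
      convert this using 1
      funext x
      rw [cheb_succ_succ]
      ring
    exact ⟨hT1, hD1⟩

lemma cheb_convexOn (n : ℕ) : ConvexOn ℝ (Set.Ici 1) (cheb n) := (cheb_bundle n).1.cvx
lemma cheb_monotoneOn (n : ℕ) : MonotoneOn (cheb n) (Set.Ici 1) := (cheb_bundle n).1.mono
lemma cheb_nonneg' (n : ℕ) {x : ℝ} (hx : 1 ≤ x) : 0 ≤ cheb n x := (cheb_bundle n).1.nonneg x hx

lemma cheb_le_pow (n : ℕ) {y : ℝ} (hy : 1 ≤ y) : cheb n y ≤ (2*y)^n := by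
  have key : ∀ m : ℕ, cheb m y ≤ (2*y)^m ∧ cheb (m+1) y ≤ (2*y)^(m+1) := by
    intro m
    induction m with
    | zero => exact ⟨by simp [cheb], by simp [cheb]; nlinarith⟩
    | succ j ih =>
      refine ⟨ih.2, ?_⟩
      rw [cheb_succ_succ]
      have h0 : 0 ≤ cheb j y := cheb_nonneg' j hy
      have h1 : 2 * y * cheb (j+1) y ≤ 2*y*(2*y)^(j+1) := by
        have := ih.2
        nlinarith
      calc 2 * y * cheb (j+1) y - cheb j y ≤ 2*y*(2*y)^(j+1) := by linarith
        _ = (2*y)^(j+2) := by ring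
  exact (key n).1

end cheblem

section analysis
open Real Set

variable {ℓ r : ℝ} {d : ℕ} {m ε : ℝ}

lemma one_le_cheb (n : ℕ) {y : ℝ} (hy : 1 ≤ y) : 1 ≤ cheb n y := by
  have h := cheb_monotoneOn n (Set.mem_Ici.2 (le_refl (1:ℝ))) (Set.mem_Ici.2 hy) hy
  rwa [cheb_at_one] at h

lemma cDelta_eq (hℓ : 0 < ℓ) (hℓr : ℓ < r) :
    cDelta ℓ r d = 1 / cheb d ((r + ℓ) / (r - ℓ)) := by
  have hr0 : (0:ℝ) < r := lt_trans hℓ hℓr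
  have h1 : 1 + 2 * (ℓ / r) / (1 - ℓ / r) = (r + ℓ) / (r - ℓ) := by
    have hne : r - ℓ ≠ 0 := by linarith
    have hne2 : r ≠ 0 := ne_of_gt hr0
    have h2 : 1 - ℓ / r = (r - ℓ) / r := by field_simp
    rw [h2]
    field_simp
    ring
  rw [cDelta, h1]

lemma Bv_ge_one (hℓ : 0 < ℓ) (hℓr : ℓ < r) : (1:ℝ) ≤ (r + ℓ) / (r - ℓ) := by
  rw [le_div_iff₀ (by linarith)]
  linarith

lemma chebB_ge_one (hℓ : 0 < ℓ) (hℓr : ℓ < r) : 1 ≤ cheb d ((r + ℓ) / (r - ℓ)) :=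
  one_le_cheb d (Bv_ge_one hℓ hℓr)

lemma chebB_pos (hℓ : 0 < ℓ) (hℓr : ℓ < r) : 0 < cheb d ((r + ℓ) / (r - ℓ)) :=
  lt_of_lt_of_le one_pos (chebB_ge_one hℓ hℓr)

lemma cDelta_pos (hℓ : 0 < ℓ) (hℓr : ℓ < r) : 0 < cDelta ℓ r d := by
  rw [cDelta_eq hℓ hℓr]
  exact div_pos one_pos (chebB_pos hℓ hℓr)

lemma cDelta_le_one (hℓ : 0 < ℓ) (hℓr : ℓ < r) : cDelta ℓ r d ≤ 1 := by
  rw [cDelta_eq hℓ hℓr]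
  rw [div_le_one (chebB_pos hℓ hℓr)]
  exact chebB_ge_one hℓ hℓr

lemma cDelta_mul_chebB (hℓ : 0 < ℓ) (hℓr : ℓ < r) :
    cDelta ℓ r d * cheb d ((r + ℓ) / (r - ℓ)) = 1 := by
  rw [cDelta_eq hℓ hℓr, one_div, inv_mul_cancel₀ (ne_of_gt (chebB_pos hℓ hℓr))]

/-- Exponential damping: for `x ≥ ℓ`, `e^{-mx}·|T_d(ψ(x))| ≤ 1`. -/
lemma damp (hℓ : 0 < ℓ) (hℓr : ℓ < r) (hm : 0 ≤ m)
    (hCII : ConstraintII ℓ r d m) {x : ℝ} (hx : ℓ ≤ x) :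
    Real.exp (-(m * x)) * |cheb d (psiMap ℓ r x)| ≤ 1 := by
  have hc : (0:ℝ) < r - ℓ := by linarith
  have hx0 : 0 < x := lt_of_lt_of_le hℓ hx
  have hexp1 : Real.exp (-(m * x)) ≤ 1 := by
    rw [← Real.exp_zero]
    exact Real.exp_le_exp.2 (by nlinarith)
  by_cases hxr : x ≤ r
  · have habs : |psiMap ℓ r x| ≤ 1 := by
      rw [abs_le, psiMap]
      constructor
      · rw [le_div_iff₀ hc]; linarith
      · rw [div_le_one hc]; linarith
    have h2 := abs_cheb_le_one d habs
    calc Real.exp (-(m * x)) * |cheb d (psiMap ℓ r x)| ≤ 1 * 1 := by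
          apply mul_le_mul hexp1 h2 (abs_nonneg _) zero_le_one
      _ = 1 := by norm_num
  · push_neg at hxr
    set y : ℝ := (2 * x - r - ℓ) / (r - ℓ) with hy
    have hpsi : psiMap ℓ r x = -y := by
      rw [psiMap, hy]; ring
    have hy1 : 1 ≤ y := by
      rw [hy, le_div_iff₀ hc]; linarith
    have habs : |cheb d (psiMap ℓ r x)| = cheb d y := by
      rw [hpsi, cheb_neg, abs_mul, abs_pow, abs_neg, abs_one, one_pow, one_mul,
        abs_of_nonneg (cheb_nonneg' d hy1)]
    rw [habs]
    have hle : cheb d y ≤ (2 * y) ^ d := cheb_le_pow d hy1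
    have h4 : 2 * y ≤ 4 * x / (r - ℓ) := by
      rw [hy, show (2:ℝ)*((2*x-r-ℓ)/(r-ℓ)) = (4*x-2*r-2*ℓ)/(r-ℓ) from by ring]
      exact (div_le_div_iff_of_pos_right hc).2 (by linarith)
    have h5 : (2 * y) ^ d ≤ (4 * x / (r - ℓ)) ^ d :=
      pow_le_pow_left₀ (by linarith) h4 d
    have hspos : 0 < 4 * x / (r - ℓ) := by positivity
    have h6 : (4 * x / (r - ℓ)) ^ d = Real.exp (d * Real.log (4 * x / (r - ℓ))) := by
      rw [Real.exp_nat_mul, Real.exp_log hspos]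
    have h7 : (d : ℝ) * Real.log (4 * x / (r - ℓ)) ≤ m * x := by
      have hlog : Real.log (4 * x / (r - ℓ)) ≤ 4 * x / (r - ℓ) - 1 :=
        Real.log_le_sub_one_of_pos hspos
      have hd0 : (0:ℝ) ≤ d := Nat.cast_nonneg d
      have hmx : 5.5 * d / (r - ℓ) * x ≤ m * x :=
        mul_le_mul_of_nonneg_right hCII (le_of_lt hx0)
      have hkey : (d : ℝ) * (4 * x / (r - ℓ) - 1) ≤ 5.5 * d / (r - ℓ) * x := by
        have hs : 0 ≤ x / (r - ℓ) := by positivity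
        have hds : 0 ≤ (d:ℝ) * (x / (r - ℓ)) := mul_nonneg hd0 hs
        have he1 : (d : ℝ) * (4 * x / (r - ℓ) - 1) = 4 * ((d:ℝ) * (x / (r - ℓ))) - d := by
          field_simp
        have he2 : 5.5 * d / (r - ℓ) * x = 5.5 * ((d:ℝ) * (x / (r - ℓ))) := by
          field_simp
        rw [he1, he2]
        linarith
      calc (d : ℝ) * Real.log (4 * x / (r - ℓ)) ≤ (d : ℝ) * (4 * x / (r - ℓ) - 1) :=
            mul_le_mul_of_nonneg_left hlog hd0
        _ ≤ 5.5 * d / (r - ℓ) * x := hkey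
        _ ≤ m * x := hmx
    calc Real.exp (-(m * x)) * cheb d y ≤ Real.exp (-(m * x)) * Real.exp (d * Real.log (4 * x / (r - ℓ))) := by
          apply mul_le_mul_of_nonneg_left _ (le_of_lt (Real.exp_pos _))
          rw [← h6]; exact le_trans hle h5
      _ = Real.exp (d * Real.log (4 * x / (r - ℓ)) - m * x) := by
          rw [← Real.exp_add]; ring_nf
      _ ≤ 1 := by
          rw [← Real.exp_zero]
          exact Real.exp_le_exp.2 (by linarith)

end analysis

section analysis2
open Real Set

variable {ℓ r : ℝ} {d : ℕ} {m ε : ℝ}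

/-- Heavy regime: `Q(x) ≥ 1 - δ` for `x ≥ ℓ`. -/
lemma Q_heavy (hℓ : 0 < ℓ) (hℓr : ℓ < r) (hm : 0 ≤ m)
    (hCII : ConstraintII ℓ r d m) {x : ℝ} (hx : ℓ ≤ x) :
    1 - cDelta ℓ r d ≤ Qfun ℓ r d m x := by
  have hδ := cDelta_pos (d := d) hℓ hℓr
  have hdamp := damp hℓ hℓr hm hCII hx
  have h1 : Real.exp (-(m * x)) * cheb d (psiMap ℓ r x) ≤ 1 := by
    calc Real.exp (-(m * x)) * cheb d (psiMap ℓ r x)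
        ≤ |Real.exp (-(m * x)) * cheb d (psiMap ℓ r x)| := le_abs_self _
      _ = Real.exp (-(m * x)) * |cheb d (psiMap ℓ r x)| := by
          rw [abs_mul, abs_of_pos (Real.exp_pos _)]
      _ ≤ 1 := hdamp
  rw [Qfun, Pd]
  nlinarith

/-- Upper bound in heavy regime: `Q(x) ≤ 2`. -/
lemma Q_heavy_upper (hℓ : 0 < ℓ) (hℓr : ℓ < r) (hm : 0 ≤ m)
    (hCII : ConstraintII ℓ r d m) {x : ℝ} (hx : ℓ ≤ x) :
    Qfun ℓ r d m x ≤ 2 := by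
  have hδ := cDelta_pos (d := d) hℓ hℓr
  have hδ1 := cDelta_le_one (d := d) hℓ hℓr
  have hdamp := damp hℓ hℓr hm hCII hx
  have h1 : -(Real.exp (-(m * x)) * cheb d (psiMap ℓ r x)) ≤ 1 := by
    calc -(Real.exp (-(m * x)) * cheb d (psiMap ℓ r x))
        ≤ |Real.exp (-(m * x)) * cheb d (psiMap ℓ r x)| := neg_le_abs _
      _ = Real.exp (-(m * x)) * |cheb d (psiMap ℓ r x)| := by
          rw [abs_mul, abs_of_pos (Real.exp_pos _)]
      _ ≤ 1 := hdamp
  rw [Qfun, Pd]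
  nlinarith

lemma psi_ge_one (hℓ : 0 < ℓ) (hℓr : ℓ < r) {x : ℝ} (hxℓ : x ≤ ℓ) :
    1 ≤ psiMap ℓ r x := by
  rw [psiMap, le_div_iff₀ (by linarith : (0:ℝ) < r - ℓ)]
  linarith

lemma psi_le_B (hℓ : 0 < ℓ) (hℓr : ℓ < r) {x : ℝ} (hx0 : 0 ≤ x) :
    psiMap ℓ r x ≤ (r + ℓ) / (r - ℓ) := by
  rw [psiMap, div_le_div_iff₀ (by linarith) (by linarith : (0:ℝ) < r - ℓ)]
  nlinarith

/-- Light regime lower bound (chord). -/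
lemma Q_light (hℓ : 0 < ℓ) (hℓr : ℓ < r) (hm : 0 ≤ m)
    {x : ℝ} (hx0 : 0 ≤ x) (hxℓ : x ≤ ℓ) :
    (1 - cDelta ℓ r d) * (x / ℓ) ≤ Qfun ℓ r d m x := by
  have hc : (0:ℝ) < r - ℓ := by linarith
  have hδ := cDelta_pos (d := d) hℓ hℓr
  set B : ℝ := (r + ℓ) / (r - ℓ) with hB
  have hB1 : 1 ≤ B := Bv_ge_one hℓ hℓr
  set a : ℝ := x / ℓ with ha
  set b : ℝ := (ℓ - x) / ℓ with hb
  have ha0 : 0 ≤ a := by positivity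
  have hb0 : 0 ≤ b := div_nonneg (by linarith) (le_of_lt hℓ)
  have hab : a + b = 1 := by rw [ha, hb]; field_simp; ring
  have hpsi : psiMap ℓ r x = a * 1 + b * B := by
    rw [psiMap, ha, hb, hB]
    field_simp
    ring
  have hconv := (cheb_convexOn d).2 (Set.mem_Ici.2 (le_refl (1:ℝ))) (Set.mem_Ici.2 hB1)
      ha0 hb0 hab
  simp only [smul_eq_mul] at hconv
  rw [cheb_at_one] at hconv
  have hchord : cheb d (psiMap ℓ r x) ≤ a * 1 + b * cheb d B := by
    rw [hpsi]; exact hconv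
  have hψ1 : 1 ≤ psiMap ℓ r x := psi_ge_one hℓ hℓr hxℓ
  have hch0 : 0 ≤ cheb d (psiMap ℓ r x) := cheb_nonneg' d hψ1
  have hδchB : cDelta ℓ r d * cheb d B = 1 := cDelta_mul_chebB hℓ hℓr
  have hE1 : Real.exp (-(m * x)) ≤ 1 := by
    rw [← Real.exp_zero]; exact Real.exp_le_exp.2 (by nlinarith)
  have hE0 : 0 < Real.exp (-(m * x)) := Real.exp_pos _
  set E := Real.exp (-(m * x))
  set δ := cDelta ℓ r d
  set c := cheb d (psiMap ℓ r x)
  have h1 : E * (δ * c) ≤ 1 * (δ * c) :=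
    mul_le_mul_of_nonneg_right hE1 (mul_nonneg hδ.le hch0)
  have h2 : δ * c ≤ δ * (a * 1 + b * cheb d B) :=
    mul_le_mul_of_nonneg_left hchord hδ.le
  have h3 : b * (δ * cheb d B) = b := by rw [hδchB, mul_one]
  rw [Qfun, Pd]
  show (1 - δ) * a ≤ 1 + E * (-δ * c)
  nlinarith [h1, h2, h3, hab]

/-- Light regime upper bound (Lipschitz-type). -/
lemma Q_light_upper (hℓ : 0 < ℓ) (hℓr : ℓ < r) (hm : 0 ≤ m)
    {x : ℝ} (hx0 : 0 ≤ x) (hxℓ : x ≤ ℓ) :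
    Qfun ℓ r d m x ≤
      (m + 2 * (4 * ((r + ℓ) / (r - ℓ)))^d / (((r + ℓ) / (r - ℓ)) * (r - ℓ))) * x := by
  have hc : (0:ℝ) < r - ℓ := by linarith
  have hδ := cDelta_pos (d := d) hℓ hℓr
  have hδ1 := cDelta_le_one (d := d) hℓ hℓr
  set B : ℝ := (r + ℓ) / (r - ℓ) with hB
  have hB1 : 1 ≤ B := Bv_ge_one hℓ hℓr
  have hB0 : 0 < B := lt_of_lt_of_le one_pos hB1
  set K : ℝ := (4 * B)^d with hK
  have hK0 : (0:ℝ) ≤ K := by positivity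
  have hψ1 : 1 ≤ psiMap ℓ r x := psi_ge_one hℓ hℓr hxℓ
  have hψB : psiMap ℓ r x ≤ B := psi_le_B hℓ hℓr hx0
  set ψ := psiMap ℓ r x with hψ
  have hch0 : 0 ≤ cheb d ψ := cheb_nonneg' d hψ1
  have hchle : cheb d ψ ≤ cheb d B :=
    cheb_monotoneOn d (Set.mem_Ici.2 hψ1) (Set.mem_Ici.2 (le_trans hψ1 hψB)) hψB
  -- convexity at points ψ and 2B
  have hden : (0:ℝ) < 2 * B - ψ := by linarith
  set lam : ℝ := B / (2 * B - ψ) with hlam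
  set mu : ℝ := (B - ψ) / (2 * B - ψ) with hmu
  have hlam0 : 0 ≤ lam := div_nonneg (le_of_lt hB0) (le_of_lt hden)
  have hmu0 : 0 ≤ mu := div_nonneg (by linarith) (le_of_lt hden)
  have hlm : lam + mu = 1 := by rw [hlam, hmu, ← add_div, div_eq_one_iff_eq hden.ne']; ring
  have hcombo : lam * ψ + mu * (2 * B) = B := by
    rw [hlam, hmu, div_mul_eq_mul_div B, div_mul_eq_mul_div (B - ψ), ← add_div, div_eq_iff hden.ne']; ring
  have hconv := (cheb_convexOn d).2 (Set.mem_Ici.2 hψ1)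
      (Set.mem_Ici.2 (by linarith : (1:ℝ) ≤ 2 * B)) hlam0 hmu0 hlm
  simp only [smul_eq_mul] at hconv
  rw [hcombo] at hconv
  have hch2B : cheb d (2 * B) ≤ K := by
    have := cheb_le_pow d (by linarith : (1:ℝ) ≤ 2 * B)
    rw [hK, show (4:ℝ) * B = 2 * (2 * B) from by ring]
    exact this
  have hmuB : mu ≤ (B - ψ) / B := div_le_div_of_nonneg_left (by linarith) hB0 (by linarith)
  -- chB - chψ ≤ mu * ch2B ≤ ((B-ψ)/B) * K
  have hstep : cheb d B - cheb d ψ ≤ (B - ψ) / B * K := by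
    have h1 : cheb d B - cheb d ψ ≤ mu * (cheb d (2*B) - cheb d ψ) := by nlinarith [hconv, hlm]
    have h2 : mu * (cheb d (2*B) - cheb d ψ) ≤ mu * K := by
      apply mul_le_mul_of_nonneg_left _ hmu0
      linarith
    have h3 : mu * K ≤ (B - ψ) / B * K := mul_le_mul_of_nonneg_right hmuB hK0
    linarith
  have hBψ : B - ψ = 2 * x / (r - ℓ) := by rw [hψ, psiMap, hB]; ring
  have hδchB : cDelta ℓ r d * cheb d B = 1 := cDelta_mul_chebB hℓ hℓr
  have hE1 : Real.exp (-(m * x)) ≤ 1 := by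
    rw [← Real.exp_zero]; exact Real.exp_le_exp.2 (by nlinarith)
  have hE0 : 0 < Real.exp (-(m * x)) := Real.exp_pos _
  have hEmx : 1 - Real.exp (-(m * x)) ≤ m * x := by
    have := Real.add_one_le_exp (-(m * x))
    linarith
  set E := Real.exp (-(m * x))
  set δ := cDelta ℓ r d
  have heq : Qfun ℓ r d m x = δ * (cheb d B - cheb d ψ) + δ * cheb d ψ * (1 - E) := by
    rw [Qfun, Pd, ← hψ]
    linear_combination -hδchB
  have hA : δ * (cheb d B - cheb d ψ) ≤ 2 * x / (r - ℓ) / B * K := by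
    calc δ * (cheb d B - cheb d ψ) ≤ 1 * (cheb d B - cheb d ψ) :=
          mul_le_mul_of_nonneg_right hδ1 (by linarith)
      _ = cheb d B - cheb d ψ := one_mul _
      _ ≤ (B - ψ) / B * K := hstep
      _ = 2 * x / (r - ℓ) / B * K := by rw [hBψ]
  have hδψ1 : δ * cheb d ψ ≤ 1 := by
    calc δ * cheb d ψ ≤ δ * cheb d B := mul_le_mul_of_nonneg_left hchle hδ.le
      _ = 1 := hδchB
  have hBd : δ * cheb d ψ * (1 - E) ≤ m * x := by
    calc δ * cheb d ψ * (1 - E) ≤ 1 * (1 - E) :=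
          mul_le_mul_of_nonneg_right hδψ1 (by linarith)
      _ = 1 - E := one_mul _
      _ ≤ m * x := hEmx
  have hring : 2 * x / (r - ℓ) / B * K = 2 * K / (B * (r - ℓ)) * x := by
    field_simp
  rw [heq]
  calc δ * (cheb d B - cheb d ψ) + δ * cheb d ψ * (1 - E)
      ≤ 2 * x / (r - ℓ) / B * K + m * x := add_le_add hA hBd
    _ = (m + 2 * K / (B * (r - ℓ))) * x := by rw [hring]; ring

end analysis2

section analysis3
open Real Set

variable {ℓ r : ℝ} {d : ℕ} {m ε : ℝ}

lemma Q_nonneg (hℓ : 0 < ℓ) (hℓr : ℓ < r) (hm : 0 ≤ m)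
    (hCII : ConstraintII ℓ r d m) {x : ℝ} (hx0 : 0 ≤ x) :
    0 ≤ Qfun ℓ r d m x := by
  have hδ1 := cDelta_le_one (d := d) hℓ hℓr
  by_cases hxℓ : x ≤ ℓ
  · have := Q_light (d := d) hℓ hℓr hm hx0 hxℓ
    have h2 : 0 ≤ (1 - cDelta ℓ r d) * (x / ℓ) :=
      mul_nonneg (by linarith) (div_nonneg hx0 hℓ.le)
    linarith
  · push_neg at hxℓ
    have := Q_heavy hℓ hℓr hm hCII (le_of_lt hxℓ)
    linarith

/-- Global linear upper bound used for summability. -/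
lemma Q_le_linear (hℓ : 0 < ℓ) (hℓr : ℓ < r) (hm : 0 ≤ m)
    (hCII : ConstraintII ℓ r d m) {x : ℝ} (hx0 : 0 ≤ x) :
    Qfun ℓ r d m x ≤
      (2 / ℓ + m + 2 * (4 * ((r + ℓ) / (r - ℓ)))^d / (((r + ℓ) / (r - ℓ)) * (r - ℓ))) * x := by
  have hc : (0:ℝ) < r - ℓ := by linarith
  have hB0 : (0:ℝ) < (r + ℓ) / (r - ℓ) := lt_of_lt_of_le one_pos (Bv_ge_one hℓ hℓr)
  have hK0 : (0:ℝ) ≤ (4 * ((r + ℓ) / (r - ℓ)))^d := by positivity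
  have ht2 : (0:ℝ) ≤ 2 * (4 * ((r + ℓ) / (r - ℓ)))^d / (((r + ℓ) / (r - ℓ)) * (r - ℓ)) := by
    positivity
  by_cases hxℓ : x ≤ ℓ
  · have h1 := Q_light_upper (d := d) hℓ hℓr hm hx0 hxℓ
    have h2 : 0 ≤ 2 / ℓ * x := by positivity
    nlinarith
  · push_neg at hxℓ
    have h1 := Q_heavy_upper hℓ hℓr hm hCII (le_of_lt hxℓ)
    have h2 : 2 ≤ 2 / ℓ * x := by
      rw [div_mul_eq_mul_div, le_div_iff₀ hℓ]
      nlinarith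
    have h3 : 0 ≤ (m + 2 * (4 * ((r + ℓ) / (r - ℓ)))^d / (((r + ℓ) / (r - ℓ)) * (r - ℓ))) * x := by
      apply mul_nonneg (by linarith) hx0
    nlinarith

lemma sqrt2_ge : (1.25:ℝ) ≤ Real.sqrt 2 := by
  nlinarith [Real.sqrt_nonneg 2, Real.sq_sqrt (show (0:ℝ) ≤ 2 by norm_num)]

set_option maxHeartbeats 1000000 in
/-- Under Constraint I, `δ ≤ ε/20`. -/
lemma cDelta_small (hℓ : 0 < ℓ) (hℓr : ℓ < r)
    (hε0 : 0 < ε) (hε1 : ε < 1) (hCI : ConstraintI ℓ r d ε) :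
    cDelta ℓ r d ≤ ε / 20 := by
  have hc : (0:ℝ) < r - ℓ := by linarith
  obtain ⟨hr3, hdbig⟩ := hCI
  set B : ℝ := (r + ℓ) / (r - ℓ) with hB
  clear_value B
  have hB1 : 1 ≤ B := by rw [hB]; exact Bv_ge_one hℓ hℓr
  set γ : ℝ := 2 * ℓ / (r - ℓ) with hγ
  clear_value γ
  have hγ0 : 0 < γ := by rw [hγ]; positivity
  have hγ1 : γ ≤ 1 := by rw [hγ, div_le_one hc]; linarith
  have hBγ : B = 1 + γ := by rw [hB, hγ]; field_simp; ring
  -- s = sqrt(B^2 - 1) ≥ sqrt(2γ)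
  have hB2 : (0:ℝ) ≤ B^2 - 1 := by nlinarith
  set s : ℝ := Real.sqrt (B^2 - 1) with hs
  clear_value s
  have hs0 : 0 ≤ s := hs ▸ Real.sqrt_nonneg _
  set u : ℝ := Real.sqrt (2 * γ) with hu
  clear_value u
  have hu0 : 0 ≤ u := hu ▸ Real.sqrt_nonneg _
  have hsu : u ≤ s := by
    rw [hu, hs]
    apply Real.sqrt_le_sqrt
    nlinarith
  have hBs0 : (0:ℝ) < B + s := by linarith
  set t : ℝ := Real.log (B + s) with ht
  clear_value t
  -- cosh t = B
  have hss : s^2 = B^2 - 1 := by rw [hs]; exact Real.sq_sqrt hB2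
  have hinv : (B + s)⁻¹ = B - s := by
    have hprod : (B + s) * (B - s) = 1 := by nlinarith
    field_simp
    nlinarith
  have hcosh : Real.cosh t = B := by
    have hpos : (0:ℝ) < B - s := by rw [← hinv]; positivity
    rw [Real.cosh_eq, ht, Real.exp_log hBs0, ← Real.log_inv, hinv, Real.exp_log hpos]
    ring
  -- lower bound on t
  have ht1 : u / (1 + u) ≤ Real.log (1 + u) := by
    have h1 : (0:ℝ) < 1 + u := by linarith
    have h2 := Real.log_le_sub_one_of_pos (show (0:ℝ) < (1+u)⁻¹ by positivity)
    rw [Real.log_inv] at h2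
    have h3 : (1 + u)⁻¹ - 1 = -(u / (1 + u)) := by field_simp; ring
    linarith
  have ht2 : Real.log (1 + u) ≤ t := by
    rw [ht]
    apply Real.log_le_log (by linarith)
    linarith
  have hu15 : u ≤ 1.5 := by
    rw [hu]
    calc Real.sqrt (2 * γ) ≤ Real.sqrt (1.5^2) := Real.sqrt_le_sqrt (by nlinarith)
      _ = 1.5 := Real.sqrt_sq (by norm_num)
  have htu : u / 2.5 ≤ t := by
    have h1 : u / 2.5 ≤ u / (1 + u) := by
      rcases eq_or_lt_of_le hu0 with h | h
      · rw [← h]; norm_num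
      · apply div_le_div_of_nonneg_left hu0 (by linarith) (by linarith)
    linarith
  have ht0 : 0 ≤ t := le_trans (by positivity) htu
  -- d * t ≥ 2 * log(20/ε)
  set L : ℝ := Real.log (20 / ε) with hL
  clear_value L
  have hL0 : 0 < L := by rw [hL]; exact Real.log_pos (by rw [lt_div_iff₀ hε0]; linarith)
  have hsqγ : Real.sqrt ((r - ℓ) / (2 * ℓ)) * u = Real.sqrt 2 := by
    rw [hu, ← Real.sqrt_mul (by positivity)]
    congr 1
    rw [hγ]
    field_simp
  have hsqrt2 : (1.25:ℝ) ≤ Real.sqrt 2 := sqrt2_ge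
  have hdt : 2 * L ≤ (d : ℝ) * t := by
    have hd' : 4 * Real.sqrt ((r - ℓ) / (2 * ℓ)) * L ≤ (d : ℝ) := hdbig
    have h1 : 4 * Real.sqrt ((r - ℓ) / (2 * ℓ)) * L * (u / 2.5) ≤ (d : ℝ) * t :=
      mul_le_mul hd' htu (div_nonneg hu0 (by norm_num)) (Nat.cast_nonneg d)
    have h2 : 4 * Real.sqrt ((r - ℓ) / (2 * ℓ)) * L * (u / 2.5)
        = (4 / 2.5) * (Real.sqrt ((r - ℓ) / (2 * ℓ)) * u) * L := by ring
    rw [h2, hsqγ] at h1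
    have h3 : 1.25 * L ≤ Real.sqrt 2 * L := mul_le_mul_of_nonneg_right hsqrt2 hL0.le
    linarith
  -- conclude
  have hch : 200 / ε^2 ≤ cheb d B := by
    have h1 : cheb d B = Real.cosh ((d : ℝ) * t) := by rw [← hcosh, cheb_cosh]
    have h2 : Real.exp ((d:ℝ) * t) / 2 ≤ Real.cosh ((d:ℝ) * t) := by
      rw [Real.cosh_eq]
      have := Real.exp_pos (-((d:ℝ) * t))
      linarith
    have h3 : Real.exp (2 * L) ≤ Real.exp ((d:ℝ) * t) := Real.exp_le_exp.2 hdt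
    have h4 : Real.exp (2 * L) = (20 / ε)^2 := by
      rw [two_mul, Real.exp_add, hL, Real.exp_log (by positivity)]
      ring
    have h5 : (20 / ε)^2 = 400 / ε^2 := by rw [div_pow]; norm_num
    rw [h1]
    calc 200 / ε^2 = 400 / ε^2 / 2 := by ring
      _ ≤ Real.exp ((d:ℝ) * t) / 2 := by
          rw [← h5, ← h4]
          linarith
      _ ≤ Real.cosh ((d:ℝ) * t) := h2
  have hch0 : (0:ℝ) < 200 / ε^2 := by positivity
  rw [cDelta_eq hℓ hℓr, ← hB]
  rw [div_le_iff₀ (lt_of_lt_of_le hch0 hch)]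
  calc (1:ℝ) = (ε / 20) * (20 / ε) := by field_simp
    _ ≤ (ε / 20) * (200 / ε^2) := by
        apply mul_le_mul_of_nonneg_left _ (by positivity)
        rw [div_le_div_iff₀ hε0 (by positivity)]
        nlinarith
    _ ≤ ε / 20 * cheb d B := by
        apply mul_le_mul_of_nonneg_left hch (by positivity)

end analysis3

section mainproof
open Real Set

/-- If `p` is `ε`-far from support size `k`, then the mass outside any nonempty set of at
most `k` elements exceeds `ε`. -/
lemma tail_far {ε : ℝ} {k : ℕ} {p : ℕ → ℝ} (hp : IsDist p)
    (hfar : FarFromSuppSize ε k p) (s : Finset ℕ) (hne : s.Nonempty) (hcard : s.card ≤ k) :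
    ε < ∑' i, (if i ∈ s then 0 else p i) := by
  obtain ⟨hp0, hp1⟩ := hp
  have hsum : Summable p := by
    by_contra hs
    rw [tsum_eq_zero_of_not_summable hs] at hp1; norm_num at hp1
  have htail_sm : Summable (fun i => if i ∈ s then 0 else p i) := by
    apply Summable.of_nonneg_of_le _ _ hsum
    · intro i; by_cases h : i ∈ s <;> simp [h, hp0 i]
    · intro i; by_cases h : i ∈ s <;> simp [h, hp0 i]
  set t : ℝ := ∑' i, (if i ∈ s then 0 else p i) with htdef
  have ht0 : 0 ≤ t :=
    tsum_nonneg (fun i => by by_cases h : i ∈ s <;> simp [h, hp0 i])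
  have hpin_sm : Summable (fun i => if i ∈ s then p i else 0) :=
    summable_of_ne_finset_zero (s := s) (fun i hi => by simp [hi])
  have hsplit : (∑ i ∈ s, p i) + t = 1 := by
    have hsum_in : ∑' i, (if i ∈ s then p i else 0) = ∑ i ∈ s, p i := by
      rw [tsum_eq_sum (s := s) (f := fun i => if i ∈ s then p i else 0) (fun b hb => by simp [hb])]
      exact Finset.sum_congr rfl (fun b hb => by simp [hb])
    rw [← hp1, htdef, ← hsum_in, ← Summable.tsum_add hpin_sm htail_sm]
    congr 1; funext i
    by_cases h : i ∈ s <;> simp [h]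
  obtain ⟨i0, hi0⟩ := hne
  set q : ℕ → ℝ := fun i => (if i ∈ s then p i else 0) + (if i = i0 then t else 0) with hq
  have hq_sm2 : Summable (fun i : ℕ => if i = i0 then t else 0) := ⟨t, hasSum_ite_eq i0 t⟩
  have hqdist : IsDist q := by
    constructor
    · intro i
      apply add_nonneg
      · by_cases h : i ∈ s <;> simp [h, hp0 i]
      · by_cases h2 : i = i0 <;> simp [h2, ht0]
    · rw [hq, Summable.tsum_add hpin_sm hq_sm2, (hasSum_ite_eq i0 t).tsum_eq,
        tsum_eq_sum (s := s) (fun b hb => by simp [hb])]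
      rw [Finset.sum_congr rfl (fun b hb => by simp [hb] : ∀ b ∈ s, (if b ∈ s then p b else 0) = p b)]
      exact hsplit
  have hsupp : {i | q i ≠ 0}.encard ≤ (k : ℕ∞) := by
    have hsub : {i | q i ≠ 0} ⊆ (s : Set ℕ) := by
      intro i hi
      by_contra hns
      have hns' : i ∉ s := by simpa using hns
      apply hi
      have hne0 : i ≠ i0 := fun h => hns' (h ▸ hi0)
      simp [hq, hns', hne0]
    calc {i | q i ≠ 0}.encard ≤ (↑s : Set ℕ).encard := Set.encard_mono hsub
      _ = (s.card : ℕ∞) := Set.encard_coe_eq_coe_finsetCard s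
      _ ≤ (k : ℕ∞) := by exact_mod_cast hcard
  have habs : ∀ i, |p i - q i| = (if i ∈ s then 0 else p i) + (if i = i0 then t else 0) := by
    intro i
    by_cases h2 : i = i0
    · subst h2
      have he : p i - q i = -t := by simp [hq, hi0]
      rw [he, abs_neg, abs_of_nonneg ht0]
      simp [hi0]
    · by_cases h : i ∈ s
      · have he : q i = p i := by simp [hq, h, h2]
        rw [he]; simp [h, h2]
      · have he : q i = 0 := by simp [hq, h, h2]
        rw [he]; simp [h, h2, abs_of_nonneg (hp0 i)]
  have hdtv : dTV p q = t := by
    rw [dTV, tsum_congr habs, Summable.tsum_add htail_sm hq_sm2, (hasSum_ite_eq i0 t).tsum_eq,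
      ← htdef]
    ring
  have := hfar q hqdist hsupp
  rw [hdtv] at this
  exact this

end mainproof

set_option maxHeartbeats 1600000 in
/-- Under Constraints I, II, IV, with `n_H` the number of heavy elements and
`μ_L` the light mass, `Σᵢ Q(p_i) ≥ (1−δ)·(n_H + μ_L/ℓ)`; moreover, for `1 ≤ k ≤ n`, if `p`
is `ε`-far from having support size at most `k`, then `Σᵢ Q(p_i) > (1 + 3ε/4)·k`. -/
theorem soundness_refinement (ℓ r : ℝ) (hℓ : 0 < ℓ) (hℓr : ℓ < r) (hr : r ≤ 1)
    (d : ℕ) (hd : 1 ≤ d) (m : ℝ) (hm : 0 ≤ m) (ε : ℝ) (hε0 : 0 < ε) (hε1 : ε < 1)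
    (n : ℕ) (hn : 1 ≤ n)
    (hCI : ConstraintI ℓ r d ε) (hCII : ConstraintII ℓ r d m) (hCIV : ConstraintIV ℓ ε n)
    (p : ℕ → ℝ) (hp : IsDist p) :
    (∑' i, Qfun ℓ r d m (p i)) ≥
      (1 - cDelta ℓ r d) *
        (({i | p i ≥ ℓ}.ncard : ℝ) + (∑' i, if 0 < p i ∧ p i < ℓ then p i else 0) / ℓ) ∧
    ∀ k : ℕ, 1 ≤ k → k ≤ n → FarFromSuppSize ε k p →
      (∑' i, Qfun ℓ r d m (p i)) > (1 + 3 * ε / 4) * k := by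
  obtain ⟨hp0, hp1⟩ := hp
  have hsum : Summable p := by
    by_contra hs
    rw [tsum_eq_zero_of_not_summable hs] at hp1; norm_num at hp1
  have hc : (0:ℝ) < r - ℓ := by linarith
  set δ := cDelta ℓ r d with hδdef
  clear_value δ
  have hδ0 : 0 < δ := hδdef ▸ cDelta_pos hℓ hℓr
  have hδ1 : δ ≤ 1 := hδdef ▸ cDelta_le_one hℓ hℓr
  have hδε : δ ≤ ε / 20 := hδdef ▸ cDelta_small hℓ hℓr hε0 hε1 hCI
  -- the heavy set is finite
  have hfin : {i | p i ≥ ℓ}.Finite := by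
    have h1 : ∀ᶠ i in Filter.cofinite, p i < ℓ :=
      hsum.tendsto_cofinite_zero.eventually_lt_const hℓ
    have h2 := Filter.eventually_cofinite.mp h1
    apply h2.subset
    intro i hi
    simp only [Set.mem_setOf_eq] at *
    exact not_lt.2 hi
  set s₀ := hfin.toFinset with hs₀
  have hmem0 : ∀ i, i ∈ s₀ ↔ ℓ ≤ p i := fun i => by
    rw [hs₀, Set.Finite.mem_toFinset]; exact Iff.rfl
  have hcard0 : ({i | p i ≥ ℓ}.ncard : ℝ) = (s₀.card : ℝ) := by
    rw [hs₀, Set.ncard_eq_toFinset_card _ hfin]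
  clear_value s₀
  -- summability of Q
  have hQsm : Summable (fun i => Qfun ℓ r d m (p i)) := by
    apply Summable.of_nonneg_of_le (fun i => Q_nonneg hℓ hℓr hm hCII (hp0 i))
      (fun i => Q_le_linear hℓ hℓr hm hCII (hp0 i))
    exact hsum.mul_left _
  set μ := ∑' i, (if 0 < p i ∧ p i < ℓ then p i else 0) with hμdef
  clear_value μ
  have hμ_sm : Summable (fun i => if 0 < p i ∧ p i < ℓ then p i else 0) := by
    apply Summable.of_nonneg_of_le
      (fun i => by by_cases h : 0 < p i ∧ p i < ℓ <;> simp [h, hp0 i])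
      (fun i => by by_cases h : 0 < p i ∧ p i < ℓ <;> simp [h, hp0 i])
      hsum
  have hμ0 : 0 ≤ μ := by
    rw [hμdef]
    exact tsum_nonneg (fun i => by by_cases h : 0 < p i ∧ p i < ℓ <;> simp [h, hp0 i])
  -- the comparison functions
  set f1 : ℕ → ℝ := fun i => if ℓ ≤ p i then 1 - δ else 0 with hf1
  clear_value f1
  set f2 : ℕ → ℝ := fun i => ((1 - δ)/ℓ) * (if 0 < p i ∧ p i < ℓ then p i else 0) with hf2
  clear_value f2
  have hf1sm : Summable f1 := by
    apply summable_of_ne_finset_zero (s := s₀)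
    intro i hi
    rw [hf1]
    exact if_neg (fun h => hi ((hmem0 i).2 h))
  have hf2sm : Summable f2 := by rw [hf2]; exact hμ_sm.mul_left _
  have hpoint : ∀ i, f1 i + f2 i ≤ Qfun ℓ r d m (p i) := by
    intro i
    by_cases h : ℓ ≤ p i
    · have hl0 : ¬(0 < p i ∧ p i < ℓ) := fun hcon => absurd h (not_le.2 hcon.2)
      rw [hf1, hf2]
      simp only [if_pos h, if_neg hl0, mul_zero, add_zero]
      exact hδdef ▸ Q_heavy hℓ hℓr hm hCII h
    · push_neg at h
      rw [hf1, hf2]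
      simp only [if_neg (not_le.2 h), zero_add]
      by_cases h2 : 0 < p i
      · simp only [if_pos (And.intro h2 h)]
        calc (1 - δ)/ℓ * p i = (1 - δ) * (p i / ℓ) := by ring
          _ ≤ Qfun ℓ r d m (p i) := hδdef ▸ Q_light hℓ hℓr hm (hp0 i) h.le
      · have hpz : p i = 0 := le_antisymm (not_lt.1 h2) (hp0 i)
        simp only [if_neg (fun hcon : 0 < p i ∧ p i < ℓ => h2 hcon.1), mul_zero]
        exact Q_nonneg hℓ hℓr hm hCII (hp0 i)
  have htf1 : ∑' i, f1 i = (s₀.card : ℝ) * (1 - δ) := by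
    have e1 : ∀ b ∉ s₀, f1 b = 0 := fun b hb => by
      rw [hf1]; exact if_neg (fun h => hb ((hmem0 b).2 h))
    have e2 : ∀ b ∈ s₀, f1 b = 1 - δ := fun b hb => by
      rw [hf1]; exact if_pos ((hmem0 b).1 hb)
    calc ∑' i, f1 i = ∑ b ∈ s₀, f1 b := tsum_eq_sum e1
      _ = ∑ _b ∈ s₀, (1 - δ) := Finset.sum_congr rfl e2
      _ = s₀.card • (1 - δ) := Finset.sum_const _
      _ = (s₀.card : ℝ) * (1 - δ) := nsmul_eq_mul _ _
  have htf2 : ∑' i, f2 i = (1 - δ)/ℓ * μ := by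
    rw [hf2, tsum_mul_left, hμdef]
  have hmain : (1 - δ) * ((s₀.card : ℝ) + μ / ℓ) ≤ ∑' i, Qfun ℓ r d m (p i) := by
    have h1 : ∑' i, (f1 i + f2 i) ≤ ∑' i, Qfun ℓ r d m (p i) :=
      Summable.tsum_le_tsum hpoint (hf1sm.add hf2sm) hQsm
    rw [Summable.tsum_add hf1sm hf2sm, htf1, htf2] at h1
    calc (1 - δ) * ((s₀.card : ℝ) + μ/ℓ)
        = (s₀.card : ℝ) * (1 - δ) + (1 - δ)/ℓ * μ := by ring
      _ ≤ _ := h1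
  constructor
  · rw [ge_iff_le, hcard0]
    exact hmain
  · intro k hk1 hkn hfar
    have hk1' : (1:ℝ) ≤ (k:ℝ) := by exact_mod_cast hk1
    have hkn' : (k:ℝ) ≤ (n:ℝ) := by exact_mod_cast hkn
    have hn1 : (1:ℝ) ≤ (n:ℝ) := by exact_mod_cast hn
    have hℓn : ℓ * (20 * n) ≤ ε := by
      have h := hCIV
      rw [ConstraintIV, le_div_iff₀ (by positivity)] at h
      exact h
    have hμtail : μ = ∑' i, (if i ∈ s₀ then 0 else p i) := by
      rw [hμdef]
      apply tsum_congr
      intro i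
      by_cases h : i ∈ s₀
      · have hh := (hmem0 i).1 h
        rw [if_neg (fun hcon : 0 < p i ∧ p i < ℓ => absurd hh (not_le.2 hcon.2)), if_pos h]
      · have hh : p i < ℓ := not_le.1 (fun hcontra => h ((hmem0 i).2 hcontra))
        rw [if_neg h]
        by_cases h2 : 0 < p i
        · rw [if_pos (And.intro h2 hh)]
        · rw [if_neg (fun hcon : 0 < p i ∧ p i < ℓ => h2 hcon.1)]
          exact (le_antisymm (not_lt.1 h2) (hp0 i)).symm
    show (1 + 3*ε/4) * (k:ℝ) < ∑' i, Qfun ℓ r d m (p i)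
    rcases le_or_gt s₀.card k with hcase | hcase
    · -- few heavy elements: light mass must exceed ε
      have hμε : ε < μ := by
        rcases Finset.eq_empty_or_nonempty s₀ with he | hne
        · have hall : ∀ i, p i < ℓ := fun i => by
            by_contra hcon; push_neg at hcon
            exact (Finset.eq_empty_iff_forall_notMem.1 he i) ((hmem0 i).2 hcon)
          have hμ1 : μ = 1 := by
            rw [hμdef, ← hp1]
            apply tsum_congr
            intro i
            by_cases h2 : 0 < p i
            · rw [if_pos (And.intro h2 (hall i))]
            · rw [if_neg (fun hcon : 0 < p i ∧ p i < ℓ => h2 hcon.1)]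
              exact (le_antisymm (not_lt.1 h2) (hp0 i)).symm
          rw [hμ1]; exact hε1
        · have ht := tail_far ⟨hp0, hp1⟩ hfar s₀ hne hcase
          rwa [← hμtail] at ht
      have hμℓ : 20 * (n:ℝ) < μ / ℓ := by
        rw [lt_div_iff₀ hℓ]
        calc 20 * (n:ℝ) * ℓ = ℓ * (20 * n) := by ring
          _ ≤ ε := hℓn
          _ < μ := hμε
      have hcnn : (0:ℝ) ≤ (s₀.card : ℝ) := Nat.cast_nonneg _
      have h1δ : 0 < 1 - δ := by linarith
      calc (1 + 3*ε/4) * (k:ℝ) < 2 * (k:ℝ) := by nlinarith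
        _ ≤ 19 * (n:ℝ) := by nlinarith
        _ = (19/20) * (20 * (n:ℝ)) := by ring
        _ ≤ (1 - δ) * (20 * (n:ℝ)) := by nlinarith
        _ < (1 - δ) * ((s₀.card : ℝ) + μ/ℓ) := by
            apply mul_lt_mul_of_pos_left _ h1δ
            linarith
        _ ≤ ∑' i, Qfun ℓ r d m (p i) := hmain
    · -- many heavy elements
      have hkpos : (0:ℝ) < (k:ℝ) + 1 := by linarith
      set Sbig := s₀.filter (fun i => 1/((k:ℝ)+1) < p i) with hSbig
      have hSbig_card : Sbig.card ≤ k := by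
        by_contra hcon
        push_neg at hcon
        obtain ⟨T, hTsub, hTcard⟩ := Finset.exists_subset_card_eq (show k+1 ≤ Sbig.card from hcon)
        have hTne : T.Nonempty := Finset.card_pos.1 (by rw [hTcard]; omega)
        have hlt : ∑ _i ∈ T, 1/((k:ℝ)+1) < ∑ i ∈ T, p i := by
          apply Finset.sum_lt_sum_of_nonempty hTne
          intro i hi
          have hmem := hTsub hi
          rw [hSbig, Finset.mem_filter] at hmem
          exact hmem.2
        rw [Finset.sum_const, hTcard, nsmul_eq_mul] at hlt
        have hone : ((k+1:ℕ):ℝ) * (1/((k:ℝ)+1)) = 1 := by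
          push_cast; field_simp
        rw [hone] at hlt
        have hle1 : ∑ i ∈ T, p i ≤ 1 := by
          rw [← hp1]; exact Summable.sum_le_tsum T (fun i _ => hp0 i) hsum
        linarith
      have hs₀Sbig : Sbig ⊆ s₀ := Finset.filter_subset _ _
      obtain ⟨T, hTsub, hTcard⟩ := Finset.exists_subset_card_eq
          (show k - Sbig.card ≤ (s₀ \ Sbig).card from by
            rw [Finset.card_sdiff_of_subset hs₀Sbig]; omega)
      set S' := Sbig ∪ T with hS'
      have hTdis : Disjoint Sbig T := by
        rw [Finset.disjoint_left]
        intro a ha hA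
        exact (Finset.mem_sdiff.1 (hTsub hA)).2 ha
      have hS'card : S'.card = k := by
        rw [hS', Finset.card_union_of_disjoint hTdis, hTcard]
        omega
      have hS'sub : S' ⊆ s₀ :=
        Finset.union_subset hs₀Sbig (hTsub.trans Finset.sdiff_subset)
      have hS'ne : S'.Nonempty := Finset.card_pos.1 (by rw [hS'card]; omega)
      have htail := tail_far ⟨hp0, hp1⟩ hfar S' hS'ne (le_of_eq hS'card)
      have hsm1 : Summable (fun i => if i ∈ s₀ then 0 else p i) := by
        apply Summable.of_nonneg_of_le _ _ hsum
        · intro i; by_cases h : i ∈ s₀ <;> simp [h, hp0 i]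
        · intro i; by_cases h : i ∈ s₀ <;> simp [h, hp0 i]
      have hsm2 : Summable (fun i => if i ∈ s₀ \ S' then p i else 0) :=
        summable_of_ne_finset_zero (s := s₀ \ S') (fun b hb => by simp [hb])
      have hdecomp : ∑' i, (if i ∈ S' then 0 else p i) = μ + ∑ i ∈ s₀ \ S', p i := by
        have hpt : ∀ i, (if i ∈ S' then 0 else p i)
            = (if i ∈ s₀ then 0 else p i) + (if i ∈ s₀ \ S' then p i else 0) := by
          intro i
          by_cases h1 : i ∈ S'
          · have h2 : i ∈ s₀ := hS'sub h1
            have h3 : i ∉ s₀ \ S' := fun hcon => (Finset.mem_sdiff.1 hcon).2 h1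
            simp [h1, h2, h3]
          · by_cases h2 : i ∈ s₀
            · have h3 : i ∈ s₀ \ S' := Finset.mem_sdiff.2 ⟨h2, h1⟩
              simp [h1, h2, h3]
            · have h3 : i ∉ s₀ \ S' := fun hcon => h2 (Finset.mem_sdiff.1 hcon).1
              simp [h1, h2, h3]
        rw [tsum_congr hpt, Summable.tsum_add hsm1 hsm2, ← hμtail,
          tsum_eq_sum (s := s₀ \ S') (fun b hb => by simp [hb])]
        congr 1
        exact Finset.sum_congr rfl (fun b hb => by simp [hb])
      have hbound : ∑ i ∈ s₀ \ S', p i ≤ ((s₀.card - k : ℕ) : ℝ) * (1/((k:ℝ)+1)) := by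
        have hb2 := Finset.sum_le_card_nsmul (s₀ \ S') p (1/((k:ℝ)+1)) (fun i hi => by
          have h1 := Finset.mem_sdiff.1 hi
          have h2 : i ∉ Sbig := fun hcon => h1.2 (Finset.mem_union_left _ hcon)
          rw [hSbig, Finset.mem_filter] at h2
          push_neg at h2
          exact h2 h1.1)
        rw [Finset.card_sdiff_of_subset hS'sub, hS'card] at hb2
        rwa [nsmul_eq_mul] at hb2
      have hcastsub : ((s₀.card - k : ℕ) : ℝ) = (s₀.card : ℝ) - (k:ℝ) := by
        rw [Nat.cast_sub (le_of_lt hcase)]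
      have hkey : (k:ℝ) + ((k:ℝ)+1) * ε < (s₀.card : ℝ) + μ/ℓ := by
        have h1 : ε < μ + ((s₀.card:ℝ) - (k:ℝ)) * (1/((k:ℝ)+1)) := by
          rw [hdecomp] at htail
          rw [← hcastsub]
          linarith
        have h2 : ((k:ℝ)+1) * ε < ((k:ℝ)+1)*μ + ((s₀.card:ℝ) - (k:ℝ)) := by
          have h2a := mul_lt_mul_of_pos_left h1 hkpos
          calc ((k:ℝ)+1)*ε < ((k:ℝ)+1)*(μ + ((s₀.card:ℝ)-(k:ℝ))*(1/((k:ℝ)+1))) := h2a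
            _ = ((k:ℝ)+1)*μ + ((s₀.card:ℝ)-(k:ℝ)) := by field_simp
        have h3 : ((k:ℝ)+1)*μ ≤ μ/ℓ := by
          rw [le_div_iff₀ hℓ]
          have hℓ1 : ℓ*((k:ℝ)+1) ≤ 1 := by nlinarith
          nlinarith
        linarith
      have h1δ : 0 < 1 - δ := by linarith
      have hkr0 : (0:ℝ) ≤ (k:ℝ) := by linarith
      calc (1 + 3*ε/4) * (k:ℝ) ≤ (1 - δ) * ((k:ℝ) + ((k:ℝ)+1)*ε) := by
            nlinarith [mul_le_mul_of_nonneg_right hδε hkr0,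
              mul_le_mul_of_nonneg_right hδε (mul_nonneg (by linarith : (0:ℝ) ≤ (k:ℝ)+1) hε0.le),
              mul_nonneg hε0.le hkr0, mul_nonneg (mul_nonneg hε0.le hε0.le) hkr0]
        _ < (1 - δ) * ((s₀.card : ℝ) + μ/ℓ) := mul_lt_mul_of_pos_left hkey h1δ
        _ ≤ ∑' i, Qfun ℓ r d m (p i) := hmain
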